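/- Let f(x,y) := x²/(2y) + (1/4)·y·log(y) on ℍ² := {(x,y) : y > 0}, with E := f_xx = 1/y, F := f_xy = −x/y², G := f_yy = (4x²+y²)/(4y³). Consider the coordinate change x = r²θ, y = r² for r > 0, θ ∈ ℝ. Then at every (r,θ) with r > 0, writing x_r = 2rθ, x_θ = r², y_r = 2r, y_θ = 0 and evaluating E, F, G at (r²θ, r²), the following hold: E·x_r² + 2F·x_r·y_r + G·y_r² = 1, E·x_r·x_θ + F·(x_r·y_θ + x_θ·y_r) + G·y_r·y_θ = 0, and E·x_θ² + 2F·x_θ·y_θ + G·y_θ² = r². That is, the coordinate change brings the Hessian quadratic form of f to the flat Euclidean metric dr² + r²dθ² in polar coordinates. -/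

import Mathlib

/-- Partial derivative in the `x`-direction. -/
noncomputable def px (f : ℝ × ℝ → ℝ) (p : ℝ × ℝ) : ℝ := fderiv ℝ f p (1, 0)

/-- Partial derivative in the `y`-direction. -/
noncomputable def py (f : ℝ × ℝ → ℝ) (p : ℝ × ℝ) : ℝ := fderiv ℝ f p (0, 1)

/-- The explicit Hessian potential `f(x,y) = x²/(2y) + (1/4) y log y` on the
upper half plane. -/
noncomputable def fExample (q : ℝ × ℝ) : ℝ :=
  q.1 ^ 2 / (2 * q.2) + (1 / 4) * q.2 * Real.log q.2

/-!
Where `0 < y`, the partial derivatives `px`, `py` are derivatives of one-variable restrictions,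
which gives `f_x = x / y` and `f_y = -x² / (2y²) + (log y + 1) / 4` on the whole (open) upper half
plane; differentiating these closed forms once more gives `E = 1 / y`, `F = -x / y²` and
`G = (4x² + y²) / (4y³)`. At `(x, y) = (r²θ, r²)` the three pullback coefficients are then rational
identities in `r` and `θ`.
-/

open Topology

theorem px_eq_of_hasDerivAt {f : ℝ × ℝ → ℝ} {p : ℝ × ℝ} {d : ℝ} (hf : DifferentiableAt ℝ f p)
    (h : HasDerivAt (fun x => f (x, p.2)) d p.1) : px f p = d :=
  (hf.hasFDerivAt.comp_hasDerivAt p.1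
    ((hasDerivAt_id p.1).prodMk (hasDerivAt_const p.1 p.2))).unique h

theorem py_eq_of_hasDerivAt {f : ℝ × ℝ → ℝ} {p : ℝ × ℝ} {d : ℝ} (hf : DifferentiableAt ℝ f p)
    (h : HasDerivAt (fun y => f (p.1, y)) d p.2) : py f p = d :=
  (hf.hasFDerivAt.comp_hasDerivAt p.2
    ((hasDerivAt_const p.2 p.1).prodMk (hasDerivAt_id p.2))).unique h

theorem Filter.EventuallyEq.px_eq {f g : ℝ × ℝ → ℝ} {p : ℝ × ℝ} (h : f =ᶠ[𝓝 p] g) :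
    px f p = px g p := by
  rw [px, px, h.fderiv_eq]

theorem Filter.EventuallyEq.py_eq {f g : ℝ × ℝ → ℝ} {p : ℝ × ℝ} (h : f =ᶠ[𝓝 p] g) :
    py f p = py g p := by
  rw [py, py, h.fderiv_eq]

theorem differentiableAt_fExample {p : ℝ × ℝ} (hp : 0 < p.2) :
    DifferentiableAt ℝ fExample p := by
  unfold fExample
  fun_prop (disch := positivity)

theorem px_fExample {p : ℝ × ℝ} (hp : 0 < p.2) : px fExample p = p.1 / p.2 := by
  have hne := hp.ne'
  have h := ((hasDerivAt_pow 2 p.1).div_const (2 * p.2)).add_const (1 / 4 * p.2 * Real.log p.2)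
  exact px_eq_of_hasDerivAt (differentiableAt_fExample hp) (h.congr_deriv (by field_simp; norm_num))

theorem py_fExample {p : ℝ × ℝ} (hp : 0 < p.2) :
    py fExample p = -p.1 ^ 2 / (2 * p.2 ^ 2) + (Real.log p.2 + 1) / 4 := by
  have hne := hp.ne'
  have h := ((hasDerivAt_const p.2 (p.1 ^ 2)).div ((hasDerivAt_id' p.2).const_mul 2)
    (by positivity)).add (((hasDerivAt_id' p.2).const_mul (1 / 4)).mul (Real.hasDerivAt_log hne))
  exact py_eq_of_hasDerivAt (differentiableAt_fExample hp) (h.congr_deriv (by field_simp; ring))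

theorem px_fExample_eventuallyEq {p : ℝ × ℝ} (hp : 0 < p.2) :
    px fExample =ᶠ[𝓝 p] fun q => q.1 / q.2 :=
  (continuousAt_const.eventually_lt continuous_snd.continuousAt hp).mono fun _ => px_fExample

theorem py_fExample_eventuallyEq {p : ℝ × ℝ} (hp : 0 < p.2) :
    py fExample =ᶠ[𝓝 p] fun q => -q.1 ^ 2 / (2 * q.2 ^ 2) + (Real.log q.2 + 1) / 4 :=
  (continuousAt_const.eventually_lt continuous_snd.continuousAt hp).mono fun _ => py_fExample

theorem px_px_fExample {p : ℝ × ℝ} (hp : 0 < p.2) : px (px fExample) p = 1 / p.2 := by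
  rw [(px_fExample_eventuallyEq hp).px_eq]
  exact px_eq_of_hasDerivAt (by fun_prop (disch := positivity))
    ((hasDerivAt_id' p.1).div_const p.2)

theorem py_px_fExample {p : ℝ × ℝ} (hp : 0 < p.2) : py (px fExample) p = -p.1 / p.2 ^ 2 := by
  rw [(px_fExample_eventuallyEq hp).py_eq]
  exact py_eq_of_hasDerivAt (by fun_prop (disch := positivity))
    (((hasDerivAt_const p.2 p.1).div (hasDerivAt_id' p.2) hp.ne').congr_deriv (by ring))

theorem py_py_fExample {p : ℝ × ℝ} (hp : 0 < p.2) :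
    py (py fExample) p = (4 * p.1 ^ 2 + p.2 ^ 2) / (4 * p.2 ^ 3) := by
  have hne := hp.ne'
  rw [(py_fExample_eventuallyEq hp).py_eq]
  have h := ((hasDerivAt_const p.2 (-p.1 ^ 2)).div ((hasDerivAt_pow 2 p.2).const_mul 2)
    (by positivity)).add (((Real.hasDerivAt_log hne).add_const 1).div_const 4)
  exact py_eq_of_hasDerivAt (by fun_prop (disch := positivity))
    (h.congr_deriv (by field_simp; ring))

theorem pullback_to_polar_flat_metric :
    ∀ r θ : ℝ, 0 < r →
      (px (px fExample) (r ^ 2 * θ, r ^ 2) * (2 * r * θ) ^ 2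
          + 2 * py (px fExample) (r ^ 2 * θ, r ^ 2) * (2 * r * θ) * (2 * r)
          + py (py fExample) (r ^ 2 * θ, r ^ 2) * (2 * r) ^ 2 = 1)
      ∧ (px (px fExample) (r ^ 2 * θ, r ^ 2) * (2 * r * θ) * r ^ 2
          + py (px fExample) (r ^ 2 * θ, r ^ 2) * ((2 * r * θ) * 0 + r ^ 2 * (2 * r))
          + py (py fExample) (r ^ 2 * θ, r ^ 2) * (2 * r) * 0 = 0)
      ∧ (px (px fExample) (r ^ 2 * θ, r ^ 2) * (r ^ 2) ^ 2
          + 2 * py (px fExample) (r ^ 2 * θ, r ^ 2) * r ^ 2 * 0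
          + py (py fExample) (r ^ 2 * θ, r ^ 2) * 0 ^ 2 = r ^ 2) := by
  intro r θ hr
  have hp : 0 < (r ^ 2 * θ, r ^ 2).2 := by positivity
  rw [px_px_fExample hp, py_px_fExample hp, py_py_fExample hp]
  have hr0 := hr.ne'
  refine ⟨?_, ?_, ?_⟩ <;> (dsimp only; field_simp; ring)
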